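/- arXiv:1409.0165 — 6 statements merged into one kernel-verified Lean document; each statement's English description precedes it below -/
import Mathlib

section
/- Let ((x'_k),(w_k)) be an O-frame for T ∈ L(X,W). Then the O-frame is boundedly complete (i.e., for every x'' ∈ X** the series ∑_k ⟨x'', x'_k⟩ w_k converges in W) if and only if for every x'' ∈ X**, boundedness of the sequence of partial sums (∑_{k=1}^N ⟨x'', x'_k⟩ w_k)_N in W implies convergence of the series ∑_k ⟨x'', x'_k⟩ w_k in W. -/
open Filter Topology

/-- O-frame: for every x, the series converges in norm to T x. -/
def IsOFrame {X W : Type*} [NormedAddCommGroup X] [NormedSpace ℝ X]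
    [NormedAddCommGroup W] [NormedSpace ℝ W]
    (T : X →L[ℝ] W) (x' : ℕ → (X →L[ℝ] ℝ)) (w : ℕ → W) : Prop :=
  ∀ x : X, Tendsto (fun N => ∑ k ∈ Finset.range N, x' k x • w k) atTop (𝓝 (T x))

/-!
The forward implication is trivial. Conversely, the partial-sum operators
`U_N = ∑_{k<N} x'_k ⊗ w_k : X → W` converge pointwise to `T`, so by Banach–Steinhaus they are
uniformly bounded, say by `C`. For `x'' ∈ X**` and `f ∈ W*` one has
`f (∑_{k<N} x''(x'_k) w_k) = x''(f ∘ U_N)`, hence by Hahn–Banach every partial sum of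
`∑ x''(x'_k) w_k` has norm at most `C ‖x''‖`, and the hypothesis applies to every `x''`.
-/

section PartialSums

variable {𝕜 X W : Type*} [NontriviallyNormedField 𝕜] [NormedAddCommGroup X] [NormedSpace 𝕜 X]
  [NormedAddCommGroup W] [NormedSpace 𝕜 W]

noncomputable def partialSumOp (x' : ℕ → X →L[𝕜] 𝕜) (w : ℕ → W) (N : ℕ) : X →L[𝕜] W :=
  ∑ k ∈ Finset.range N, (x' k).smulRight (w k)

theorem partialSumOp_apply (x' : ℕ → X →L[𝕜] 𝕜) (w : ℕ → W) (N : ℕ) (x : X) :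
    partialSumOp x' w N x = ∑ k ∈ Finset.range N, x' k x • w k := by
  simp [partialSumOp]

theorem dual_apply_sum_bidual_smul (x' : ℕ → X →L[𝕜] 𝕜) (w : ℕ → W) (N : ℕ)
    (x'' : (X →L[𝕜] 𝕜) →L[𝕜] 𝕜) (f : W →L[𝕜] 𝕜) :
    f (∑ k ∈ Finset.range N, x'' (x' k) • w k) = x'' (f.comp (partialSumOp x' w N)) := by
  have hcomp : f.comp (partialSumOp x' w N) = ∑ k ∈ Finset.range N, f (w k) • x' k := by
    ext x
    simp [partialSumOp_apply, mul_comm]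
  simp [hcomp, mul_comm]

end PartialSums

theorem norm_sum_bidual_smul_le {𝕜 X W : Type*} [RCLike 𝕜] [NormedAddCommGroup X]
    [NormedSpace 𝕜 X] [NormedAddCommGroup W] [NormedSpace 𝕜 W] (x' : ℕ → X →L[𝕜] 𝕜)
    (w : ℕ → W) (N : ℕ) (x'' : (X →L[𝕜] 𝕜) →L[𝕜] 𝕜) :
    ‖∑ k ∈ Finset.range N, x'' (x' k) • w k‖ ≤ ‖x''‖ * ‖partialSumOp x' w N‖ := by
  refine NormedSpace.norm_le_dual_bound 𝕜 _ (by positivity) fun f => ?_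
  rw [dual_apply_sum_bidual_smul]
  calc ‖x'' (f.comp (partialSumOp x' w N))‖
      ≤ ‖x''‖ * ‖f.comp (partialSumOp x' w N)‖ := x''.le_opNorm _
    _ ≤ ‖x''‖ * (‖f‖ * ‖partialSumOp x' w N‖) := by gcongr; exact f.opNorm_comp_le _
    _ = ‖x''‖ * ‖partialSumOp x' w N‖ * ‖f‖ := by ring

namespace IsOFrame

variable {X W : Type*} [NormedAddCommGroup X] [NormedSpace ℝ X] [CompleteSpace X]
  [NormedAddCommGroup W] [NormedSpace ℝ W] {T : X →L[ℝ] W} {x' : ℕ → X →L[ℝ] ℝ} {w : ℕ → W}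

theorem exists_norm_partialSumOp_le (hF : IsOFrame T x' w) :
    ∃ C, ∀ N, ‖partialSumOp x' w N‖ ≤ C := by
  refine banach_steinhaus fun x => ?_
  obtain ⟨C, hC⟩ := (hF x).norm.bddAbove_range
  exact ⟨C, fun N => by simpa [partialSumOp_apply] using hC ⟨N, rfl⟩⟩

theorem exists_norm_sum_bidual_smul_le (hF : IsOFrame T x' w) (x'' : (X →L[ℝ] ℝ) →L[ℝ] ℝ) :
    ∃ M, ∀ N, ‖∑ k ∈ Finset.range N, x'' (x' k) • w k‖ ≤ M := by
  obtain ⟨C, hC⟩ := hF.exists_norm_partialSumOp_le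
  exact ⟨‖x''‖ * C, fun N =>
    (norm_sum_bidual_smul_le x' w N x'').trans (by gcongr; exact hC N)⟩

end IsOFrame

theorem oframe_boundedlyComplete_iff_general {X W : Type*}
    [NormedAddCommGroup X] [NormedSpace ℝ X] [CompleteSpace X]
    [NormedAddCommGroup W] [NormedSpace ℝ W]
    (T : X →L[ℝ] W) (x' : ℕ → (X →L[ℝ] ℝ)) (w : ℕ → W)
    (hF : IsOFrame T x' w) :
    (∀ x'' : (X →L[ℝ] ℝ) →L[ℝ] ℝ, ∃ w₀ : W,
        Tendsto (fun N => ∑ k ∈ Finset.range N, x'' (x' k) • w k) atTop (𝓝 w₀))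
      ↔
    (∀ x'' : (X →L[ℝ] ℝ) →L[ℝ] ℝ,
        (∃ M : ℝ, ∀ N, ‖∑ k ∈ Finset.range N, x'' (x' k) • w k‖ ≤ M) →
        ∃ w₀ : W,
          Tendsto (fun N => ∑ k ∈ Finset.range N, x'' (x' k) • w k) atTop (𝓝 w₀)) :=
  ⟨fun h x'' _ => h x'', fun h x'' => h x'' (hF.exists_norm_sum_bidual_smul_le x'')⟩

/-- An O-frame is boundedly complete iff boundedness of partial sums implies convergence. -/
theorem oframe_boundedlyComplete_iff {X W : Type*}
    [NormedAddCommGroup X] [NormedSpace ℝ X] [CompleteSpace X]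
    [NormedAddCommGroup W] [NormedSpace ℝ W] [CompleteSpace W]
    (T : X →L[ℝ] W) (x' : ℕ → (X →L[ℝ] ℝ)) (w : ℕ → W)
    (hF : IsOFrame T x' w) :
    (∀ x'' : (X →L[ℝ] ℝ) →L[ℝ] ℝ, ∃ w₀ : W,
        Tendsto (fun N => ∑ k ∈ Finset.range N, x'' (x' k) • w k) atTop (𝓝 w₀))
      ↔
    (∀ x'' : (X →L[ℝ] ℝ) →L[ℝ] ℝ,
        (∃ M : ℝ, ∀ N, ‖∑ k ∈ Finset.range N, x'' (x' k) • w k‖ ≤ M) →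
        ∃ w₀ : W,
          Tendsto (fun N => ∑ k ∈ Finset.range N, x'' (x' k) • w k) atTop (𝓝 w₀)) :=
  oframe_boundedlyComplete_iff_general T x' w hF
end

section
/- If T ∈ L(X,W) admits an O-frame ((x'_k),(w_k)) that is both boundedly complete and shrinking, then T is weakly compact; indeed T** maps X** into W (identified with its canonical image in W**), with T** x'' = ∑_k ⟨x'', x'_k⟩ w_k. -/
/-!
Both `x'' (T* w')` and `w' w₀` are limits of the same scalar partial sums
`∑_{k<N} x''(x'_k) w'(w_k)`: the first because the shrinking series `∑ w'(w_k) x'_k` converges in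
norm, necessarily to `T* w'`, the second because `∑ x''(x'_k) w_k` converges to `w₀`.
-/

open Filter Topology

theorem LinearMap.apply_sum_smul_comm {R E F ι : Type*} [CommSemiring R]
    [AddCommMonoid E] [Module R E] [AddCommMonoid F] [Module R F]
    (φ : E →ₗ[R] R) (ψ : F →ₗ[R] R) (u : ι → E) (v : ι → F) (s : Finset ι) :
    φ (∑ k ∈ s, ψ (v k) • u k) = ψ (∑ k ∈ s, φ (u k) • v k) := by
  simp only [map_sum, map_smul, smul_eq_mul, mul_comm]

namespace IsOFrame

variable {X W : Type*} [NormedAddCommGroup X] [NormedSpace ℝ X]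
  [NormedAddCommGroup W] [NormedSpace ℝ W]
  {T : X →L[ℝ] W} {x' : ℕ → (X →L[ℝ] ℝ)} {w : ℕ → W}

theorem eq_comp_of_tendsto (hF : IsOFrame T x' w) {w' : W →L[ℝ] ℝ} {L : X →L[ℝ] ℝ}
    (hL : Tendsto (fun N => ∑ k ∈ Finset.range N, w' (w k) • x' k) atTop (𝓝 L)) :
    L = w'.comp T := by
  ext x
  have hL_apply : Tendsto (fun N => ∑ k ∈ Finset.range N, w' (w k) * x' k x) atTop (𝓝 (L x)) := by
    simpa [Function.comp_def] using ((ContinuousLinearMap.apply ℝ ℝ x).continuous.tendsto L).comp hL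
  have hT_apply : Tendsto (fun N => ∑ k ∈ Finset.range N, w' (w k) * x' k x) atTop
      (𝓝 (w' (T x))) := by
    simpa [Function.comp_def, mul_comm] using (w'.continuous.tendsto (T x)).comp (hF x)
  exact tendsto_nhds_unique hL_apply hT_apply

theorem bidual_apply_comp_eq_of_tendsto (hF : IsOFrame T x' w) {w' : W →L[ℝ] ℝ}
    {x'' : (X →L[ℝ] ℝ) →L[ℝ] ℝ} {w₀ : W}
    (hw₀ : Tendsto (fun N => ∑ k ∈ Finset.range N, x'' (x' k) • w k) atTop (𝓝 w₀))
    {L : X →L[ℝ] ℝ} (hL : Tendsto (fun N => ∑ k ∈ Finset.range N, w' (w k) • x' k) atTop (𝓝 L)) :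
    x'' (w'.comp T) = w' w₀ := by
  rw [← hF.eq_comp_of_tendsto hL]
  have hx'' := (x''.continuous.tendsto L).comp hL
  have hw' := (w'.continuous.tendsto w₀).comp hw₀
  refine tendsto_nhds_unique ?_ hw'
  convert hx'' using 1
  ext N
  exact ((x'' : (X →L[ℝ] ℝ) →ₗ[ℝ] ℝ).apply_sum_smul_comm (w' : W →ₗ[ℝ] ℝ) x' w _).symm

end IsOFrame

theorem oframe_weaklyCompact_general {X W : Type*}
    [NormedAddCommGroup X] [NormedSpace ℝ X]
    [NormedAddCommGroup W] [NormedSpace ℝ W]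
    (T : X →L[ℝ] W) (x' : ℕ → (X →L[ℝ] ℝ)) (w : ℕ → W)
    (hF : IsOFrame T x' w)
    (hbc : ∀ x'' : (X →L[ℝ] ℝ) →L[ℝ] ℝ, ∃ w₀ : W,
        Tendsto (fun N => ∑ k ∈ Finset.range N, x'' (x' k) • w k) atTop (𝓝 w₀))
    (hsh : ∀ w' : W →L[ℝ] ℝ, ∃ L : X →L[ℝ] ℝ,
        Tendsto (fun N => ∑ k ∈ Finset.range N, w' (w k) • x' k) atTop (𝓝 L)) :
    ∀ x'' : (X →L[ℝ] ℝ) →L[ℝ] ℝ, ∃ w₀ : W,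
      (∀ w' : W →L[ℝ] ℝ, x'' (w'.comp T) = w' w₀) ∧
      Tendsto (fun N => ∑ k ∈ Finset.range N, x'' (x' k) • w k) atTop (𝓝 w₀) := by
  intro x''
  obtain ⟨w₀, hw₀⟩ := hbc x''
  refine ⟨w₀, fun w' => ?_, hw₀⟩
  obtain ⟨L, hL⟩ := hsh w'
  exact hF.bidual_apply_comp_eq_of_tendsto hw₀ hL

/-- If T has a boundedly complete and shrinking O-frame then T is weakly compact:
T** maps X** into (the canonical image of) W, with T'' x'' = ∑ ⟨x'', x'_k⟩ w_k. -/
theorem oframe_weaklyCompact {X W : Type*}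
    [NormedAddCommGroup X] [NormedSpace ℝ X] [CompleteSpace X]
    [NormedAddCommGroup W] [NormedSpace ℝ W] [CompleteSpace W]
    (T : X →L[ℝ] W) (x' : ℕ → (X →L[ℝ] ℝ)) (w : ℕ → W)
    (hF : IsOFrame T x' w)
    (hbc : ∀ x'' : (X →L[ℝ] ℝ) →L[ℝ] ℝ, ∃ w₀ : W,
        Tendsto (fun N => ∑ k ∈ Finset.range N, x'' (x' k) • w k) atTop (𝓝 w₀))
    (hsh : ∀ w' : W →L[ℝ] ℝ, ∃ L : X →L[ℝ] ℝ,
        Tendsto (fun N => ∑ k ∈ Finset.range N, w' (w k) • x' k) atTop (𝓝 L)) :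
    ∀ x'' : (X →L[ℝ] ℝ) →L[ℝ] ℝ, ∃ w₀ : W,
      (∀ w' : W →L[ℝ] ℝ, x'' (w'.comp T) = w' w₀) ∧
      Tendsto (fun N => ∑ k ∈ Finset.range N, x'' (x' k) • w k) atTop (𝓝 w₀) :=
  oframe_weaklyCompact_general T x' w hF hbc hsh
end

section
/- A bounded operator T ∈ L(X,W) between Banach spaces admits an O-frame if and only if T factors through a Banach space with a Schauder basis, i.e., T = j ∘ A with A ∈ L(X,Z), j ∈ L(Z,W), Z a Banach space with a Schauder basis. -/
/-!
If `T = j ∘ A` and `(e_k, e*_k)` is a basis of the middle space, then `(e*_k ∘ A, j e_k)` is an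
O-frame for `T`.

Conversely, let `(x'_k, v_k)` be an O-frame for `T` with every `v_k ≠ 0`. The sequences of
partial sums of the convergent series `∑ c_k v_k`, viewed as continuous functions on `ℕ ∪ {∞}`
with the sup norm, form a closed subspace `Z`. The vectors `e_k = (0, …, 0, v_k, v_k, …)` are a
Schauder basis of `Z`: the `k`-th coordinate is read off from the `k`-th increment by a
functional `φ_k` with `φ_k v_k = 1`. By Banach–Steinhaus `x ↦ (∑_{k<N} x'_k(x) v_k)_N` is a
bounded map `X → Z`, and `T` is this map followed by evaluation at `∞`. An arbitrary O-frame
`(x'_k, w_k)` for `T` is reduced to this case by passing to `W × ℝ` and the vectors `(w_k, ε_k)`,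
with `ε_k > 0` so small that `∑ x'_k(x) ε_k` converges absolutely.
-/

open Filter Topology

/-- A Banach space together with a Schauder basis. -/
structure BanachWithBasis where
  carrier : Type
  [grp : NormedAddCommGroup carrier]
  [mod : NormedSpace ℝ carrier]
  [compl : CompleteSpace carrier]
  vec : ℕ → carrier
  coord : ℕ → carrier →L[ℝ] ℝ
  biorth : ∀ k j, coord k (vec j) = if k = j then 1 else 0
  expand : ∀ z : carrier,
    Tendsto (fun N => ∑ k ∈ Finset.range N, coord k z • vec k) atTop (𝓝 z)

attribute [instance] BanachWithBasis.grp BanachWithBasis.mod BanachWithBasis.compl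


open scoped OnePoint

@[simp]
theorem OnePoint.continuousMapMkNat_coe {Y : Type*} [TopologicalSpace Y] (f : ℕ → Y) (y : Y)
    (h : Tendsto f atTop (𝓝 y)) (N : ℕ) : continuousMapMkNat f y h N = f N :=
  rfl

@[simp]
theorem OnePoint.continuousMapMkNat_infty {Y : Type*} [TopologicalSpace Y] (f : ℕ → Y) (y : Y)
    (h : Tendsto f atTop (𝓝 y)) : continuousMapMkNat f y h ∞ = y :=
  rfl

namespace SchauderBasis

variable {E : Type*} [NormedAddCommGroup E] [NormedSpace ℝ E]

theorem tendsto_sum_range (b : SchauderBasis ℝ E) (z : E) :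
    Tendsto (fun N => ∑ k ∈ Finset.range N, b.coord k z • b k) atTop (𝓝 z) := by
  simpa using b.tendsto_proj z

theorem injective_coord (b : SchauderBasis ℝ E) : Function.Injective fun z k => b.coord k z := by
  intro z z' h
  have hc : ∀ k, b.coord k z = b.coord k z' := congrFun h
  exact tendsto_nhds_unique (b.tendsto_sum_range z)
    (by simpa only [hc] using b.tendsto_sum_range z')

/-- `BanachWithBasis` asks for a carrier in `Type`; a space with a Schauder basis is small, since
it injects into `ℕ → ℝ`, so it can be shrunk there. -/
theorem exists_banachWithBasis [CompleteSpace E] (b : SchauderBasis ℝ E) :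
    ∃ Z : BanachWithBasis, Nonempty (Z.carrier ≃L[ℝ] E) := by
  have : Small.{0} E := small_of_injective b.injective_coord
  let Φ := Shrink.continuousLinearEquiv ℝ E
  have : CompleteSpace (Shrink.{0} E) := (completeSpace_congr Φ.isUniformEmbedding).2 ‹_›
  refine ⟨⟨Shrink.{0} E, fun k => Φ.symm (b k), fun k => b.coord k ∘L Φ.toContinuousLinearMap,
    fun k j => ?_, fun z => ?_⟩, ⟨Φ⟩⟩
  · change b.coord k (Φ (Φ.symm (b j))) = _
    rw [Φ.apply_symm_apply, b.ortho]
    simp [Pi.single_apply]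
  · have h := (Φ.symm.continuous.tendsto _).comp (b.tendsto_sum_range (Φ z))
    rw [Φ.symm_apply_apply] at h
    refine h.congr fun N => ?_
    simp only [Function.comp_apply, map_sum, map_smul]
    rfl

end SchauderBasis

section

variable {V : Type*} [NormedAddCommGroup V]

namespace partialSumSpace

def basisFun (v : ℕ → V) (k : ℕ) : C(OnePoint ℕ, V) :=
  OnePoint.continuousMapMkNat (fun N => if k < N then v k else 0) (v k)
    (tendsto_const_nhds.congr' ((eventually_gt_atTop k).mono fun _ h => (if_pos h).symm))

theorem basisFun_succ_sub {v : ℕ → V} (k N : ℕ) :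
    basisFun v k (N + 1 : ℕ) - basisFun v k N = if N = k then v k else 0 := by
  simp only [basisFun, OnePoint.continuousMapMkNat_coe]
  split_ifs <;> subst_vars <;> simp_all <;> omega

end partialSumSpace

variable [NormedSpace ℝ V]

/-- The sequences of partial sums `N ↦ ∑ k < N, c k • v k` of convergent series, each extended to
`∞` by its sum. -/
def partialSumSpace (v : ℕ → V) : Submodule ℝ C(OnePoint ℕ, V) where
  carrier := {f | f (0 : ℕ) = 0 ∧ ∀ N : ℕ, f (N + 1 : ℕ) - f N ∈ ℝ ∙ v N}
  zero_mem' := by simp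
  add_mem' := by
    rintro f g ⟨hf0, hf⟩ ⟨hg0, hg⟩
    refine ⟨by simp [hf0, hg0], fun N => ?_⟩
    simpa [add_sub_add_comm] using add_mem (hf N) (hg N)
  smul_mem' := by
    rintro c f ⟨hf0, hf⟩
    refine ⟨by simp [hf0], fun N => ?_⟩
    simpa [← smul_sub] using Submodule.smul_mem _ c (hf N)

namespace partialSumSpace

theorem isClosed (v : ℕ → V) : IsClosed (partialSumSpace v : Set C(OnePoint ℕ, V)) := by
  simp only [partialSumSpace, Submodule.coe_set_mk, AddSubmonoid.coe_set_mk,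
    AddSubsemigroup.coe_set_mk, Set.ofPred_and, Set.ofPred_forall]
  refine (isClosed_eq (continuous_eval_const _) continuous_const).inter
    (isClosed_iInter fun N => ?_)
  exact (Submodule.closed_of_finiteDimensional _).preimage
    ((continuous_eval_const _).sub (continuous_eval_const _))

variable {v : ℕ → V}

def coord (φ : ℕ → StrongDual ℝ V) (k : ℕ) : StrongDual ℝ (partialSumSpace v) :=
  φ k ∘L (ContinuousMap.evalCLM ℝ ((k + 1 : ℕ) : OnePoint ℕ) -
    ContinuousMap.evalCLM ℝ (k : OnePoint ℕ)) ∘L (partialSumSpace v).subtypeL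

theorem coord_smul {φ : ℕ → StrongDual ℝ V} {k : ℕ} (hφ : φ k (v k) = 1)
    (f : partialSumSpace v) : coord φ k f • v k = f.1 (k + 1 : ℕ) - f.1 k := by
  obtain ⟨c, hc⟩ := Submodule.mem_span_singleton.1 (f.2.2 k)
  change φ k (f.1 (k + 1 : ℕ) - f.1 k) • v k = _
  rw [← hc, map_smul, hφ, smul_eq_mul, mul_one]

variable (v) in
def basisVec (k : ℕ) : partialSumSpace v :=
  ⟨basisFun v k, by
    refine ⟨if_neg k.not_lt_zero (t := v k), fun N => ?_⟩
    rw [basisFun_succ_sub]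
    split_ifs with h
    · exact h ▸ Submodule.mem_span_singleton_self (v N)
    · exact Submodule.zero_mem _⟩

variable {φ : ℕ → StrongDual ℝ V}

theorem sum_coord_smul_basisVec_apply_coe (hφ : ∀ k, φ k (v k) = 1) (f : partialSumSpace v)
    (n N : ℕ) : (∑ k ∈ Finset.range n, coord φ k f • basisVec v k).1 N = f.1 (min n N : ℕ) := by
  have hterm : ∀ k, (coord φ k f • basisVec v k).1 N =
      if k < N then f.1 (k + 1 : ℕ) - f.1 k else 0 := fun k => by
    change coord φ k f • (if k < N then v k else 0) = _
    split_ifs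
    · exact coord_smul (hφ k) f
    · exact smul_zero _
  have hfilter : (Finset.range n).filter (· < N) = Finset.range (min n N) := by
    ext k
    simp only [Finset.mem_filter, Finset.mem_range]
    omega
  rw [Submodule.coe_sum, ContinuousMap.sum_apply]
  simp only [hterm]
  rw [← Finset.sum_filter, hfilter, Finset.sum_range_sub (fun k : ℕ => f.1 k), f.2.1, sub_zero]

theorem sum_coord_smul_basisVec_apply_infty (hφ : ∀ k, φ k (v k) = 1) (f : partialSumSpace v)
    (n : ℕ) : (∑ k ∈ Finset.range n, coord φ k f • basisVec v k).1 ∞ = f.1 n := by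
  rw [Submodule.coe_sum, ContinuousMap.sum_apply]
  change ∑ k ∈ Finset.range n, coord φ k f • v k = _
  simp only [coord_smul (hφ _)]
  rw [Finset.sum_range_sub (fun k : ℕ => f.1 k), f.2.1, sub_zero]

theorem tendsto_sum_coord_smul_basisVec (hφ : ∀ k, φ k (v k) = 1) (f : partialSumSpace v) :
    Tendsto (fun n => ∑ k ∈ Finset.range n, coord φ k f • basisVec v k) atTop (𝓝 f) := by
  have hf : Tendsto (fun N : ℕ => f.1 N) atTop (𝓝 (f.1 ∞)) :=
    (OnePoint.continuous_iff_from_nat _).1 f.1.continuous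
  rw [Metric.tendsto_atTop]
  intro ε hε
  obtain ⟨n₀, hn₀⟩ := Metric.tendsto_atTop.1 hf (ε / 3) (by positivity)
  refine ⟨n₀, fun n hn => ?_⟩
  rw [Subtype.dist_eq]
  refine ((ContinuousMap.dist_le (by positivity : 0 ≤ 2 * (ε / 3))).2 fun p => ?_).trans_lt
    (by linarith)
  induction p using OnePoint.rec with
  | infty =>
    rw [sum_coord_smul_basisVec_apply_infty hφ]
    linarith [hn₀ n hn]
  | coe N =>
    rw [sum_coord_smul_basisVec_apply_coe hφ]
    rcases le_total n N with h | h
    · rw [min_eq_left h]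
      linarith [dist_triangle_right (f.1 n) (f.1 N) (f.1 ∞), hn₀ n hn, hn₀ N (hn.trans h)]
    · rw [min_eq_right h, dist_self]
      positivity

def schauderBasis (hφ : ∀ k, φ k (v k) = 1) : SchauderBasis ℝ (partialSumSpace v) where
  basis := basisVec v
  coord := coord φ
  ortho k j := by
    change φ k (basisFun v j (k + 1 : ℕ) - basisFun v j k) = _
    rw [basisFun_succ_sub]
    by_cases h : k = j
    · subst h
      simp [hφ]
    · simp [h]
  expansion f := by
    rw [HasSum, SummationFilter.conditional_filter_eq_map_range, tendsto_map'_iff]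
    exact tendsto_sum_coord_smul_basisVec hφ f

end partialSumSpace

namespace IsOFrame

variable {X : Type*} [NormedAddCommGroup X] [NormedSpace ℝ X]
  {T : X →L[ℝ] V} {x' : ℕ → StrongDual ℝ X} {v : ℕ → V}

theorem exists_bound_partialSum [CompleteSpace X] (hT : IsOFrame T x' v) :
    ∃ C, ∀ N x, ‖∑ k ∈ Finset.range N, x' k x • v k‖ ≤ C * ‖x‖ := by
  let S : ℕ → X →L[ℝ] V := fun N => ∑ k ∈ Finset.range N, (x' k).smulRight (v k)
  have hS : ∀ N x, S N x = ∑ k ∈ Finset.range N, x' k x • v k := fun N x => by simp [S]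
  obtain ⟨C, hC⟩ := banach_steinhaus fun x => by
    obtain ⟨B, hB⟩ := (hT x).norm.bddAbove_range
    exact ⟨B, fun N => hS N x ▸ hB (Set.mem_range_self N)⟩
  exact ⟨C, fun N x => hS N x ▸ (S N).le_of_opNorm_le (hC N) x⟩

noncomputable def partialSums [CompleteSpace X] (hT : IsOFrame T x' v) :
    X →L[ℝ] C(OnePoint ℕ, V) :=
  LinearMap.mkContinuousOfExistsBound
    { toFun := fun x => OnePoint.continuousMapMkNat _ (T x) (hT x)
      map_add' := fun x y => by
        ext p
        induction p using OnePoint.rec with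
        | infty => exact map_add T x y
        | coe N => simp [Finset.sum_add_distrib, add_smul]
      map_smul' := fun c x => by
        ext p
        induction p using OnePoint.rec with
        | infty => exact map_smul T c x
        | coe N => simp [Finset.smul_sum, mul_smul] }
    (by
      obtain ⟨C, hC⟩ := hT.exists_bound_partialSum
      refine ⟨C, fun x =>
        (ContinuousMap.norm_le _ ((norm_nonneg _).trans (hC 0 x))).2 fun p => ?_⟩
      induction p using OnePoint.rec with
      | infty => exact le_of_tendsto' (hT x).norm fun N => hC N x
      | coe N => exact hC N x)

theorem partialSums_mem [CompleteSpace X] (hT : IsOFrame T x' v) (x : X) :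
    hT.partialSums x ∈ partialSumSpace v := by
  refine ⟨by simp [partialSums], fun N => ?_⟩
  simp only [partialSums, LinearMap.mkContinuousOfExistsBound_apply, LinearMap.coe_mk,
    AddHom.coe_mk, OnePoint.continuousMapMkNat_coe, Finset.sum_range_succ, add_sub_cancel_left]
  exact Submodule.smul_mem _ _ (Submodule.mem_span_singleton_self _)

theorem exists_factorization [CompleteSpace X] [CompleteSpace V] (hT : IsOFrame T x' v)
    (hv : ∀ k, v k ≠ 0) :
    ∃ (Z : BanachWithBasis) (A : X →L[ℝ] Z.carrier) (j : Z.carrier →L[ℝ] V), T = j.comp A := by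
  choose φ hφ using fun k => SeparatingDual.exists_eq_one (R := ℝ) (hv k)
  have : CompleteSpace (partialSumSpace v) := (partialSumSpace.isClosed v).completeSpace_coe
  obtain ⟨Z, ⟨Φ⟩⟩ := (partialSumSpace.schauderBasis hφ).exists_banachWithBasis
  let A := hT.partialSums.codRestrict (partialSumSpace v) hT.partialSums_mem
  let j := ContinuousMap.evalCLM ℝ ∞ ∘L (partialSumSpace v).subtypeL
  refine ⟨Z, Φ.symm ∘L A, j ∘L Φ.toContinuousLinearMap, ?_⟩
  ext x
  simp [A, j, partialSums]

theorem prod (hT : IsOFrame T x' v) {S : StrongDual ℝ X} {ε : ℕ → ℝ}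
    (hS : ∀ x, HasSum (fun k => x' k x * ε k) (S x)) :
    IsOFrame (T.prod S) x' fun k => (v k, ε k) := fun x =>
  ((hT x).prodMk_nhds (hS x).tendsto_sum_nat).congr fun N => by
    ext <;> simp [Prod.fst_sum, Prod.snd_sum]

end IsOFrame

end

theorem exists_pos_hasSum_apply_mul {X : Type*} [NormedAddCommGroup X] [NormedSpace ℝ X]
    (x' : ℕ → StrongDual ℝ X) :
    ∃ ε : ℕ → ℝ, (∀ k, 0 < ε k) ∧
      ∃ S : StrongDual ℝ X, ∀ x, HasSum (fun k => x' k x * ε k) (S x) := by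
  set ε : ℕ → ℝ := fun k => (1 / 2) ^ k / (1 + ‖x' k‖)
  have hε : ∀ k, 0 < ε k := fun k => by positivity
  have hsum : Summable fun k => ε k • x' k := by
    refine summable_geometric_two.of_norm_bounded fun k => ?_
    rw [norm_smul, Real.norm_of_nonneg (hε k).le, div_mul_eq_mul_div, div_le_iff₀ (by positivity)]
    gcongr
    linarith
  refine ⟨ε, hε, ∑' k, ε k • x' k, fun x => ?_⟩
  simpa [mul_comm] using hsum.hasSum.mapL (ContinuousLinearMap.apply ℝ ℝ x)

theorem BanachWithBasis.isOFrame_comp {X W : Type*} [NormedAddCommGroup X] [NormedSpace ℝ X]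
    [NormedAddCommGroup W] [NormedSpace ℝ W] (Z : BanachWithBasis) (A : X →L[ℝ] Z.carrier)
    (j : Z.carrier →L[ℝ] W) :
    IsOFrame (j.comp A) (fun k => (Z.coord k).comp A) fun k => j (Z.vec k) := fun x => by
  simpa only [Function.comp_def, map_sum, map_smul, ContinuousLinearMap.comp_apply] using
    (j.continuous.tendsto _).comp (Z.expand (A x))

/-- A bounded operator between Banach spaces admits an O-frame iff it factors
through a Banach space with a Schauder basis. -/
theorem oframe_iff_factors_through_basis {X W : Type*}
    [NormedAddCommGroup X] [NormedSpace ℝ X] [CompleteSpace X]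
    [NormedAddCommGroup W] [NormedSpace ℝ W] [CompleteSpace W]
    (T : X →L[ℝ] W) :
    (∃ (x' : ℕ → (X →L[ℝ] ℝ)) (w : ℕ → W), IsOFrame T x' w) ↔
    (∃ (Z : BanachWithBasis) (A : X →L[ℝ] Z.carrier) (j : Z.carrier →L[ℝ] W),
        T = j.comp A) := by
  constructor
  · rintro ⟨x', w, hT⟩
    obtain ⟨ε, hε, S, hS⟩ := exists_pos_hasSum_apply_mul x'
    obtain ⟨Z, A, j, hj⟩ :=
      (hT.prod hS).exists_factorization fun k h => (hε k).ne' (congrArg Prod.snd h)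
    refine ⟨Z, A, (ContinuousLinearMap.fst ℝ W ℝ).comp j, ?_⟩
    rw [ContinuousLinearMap.comp_assoc, ← hj, ContinuousLinearMap.fst_comp_prod]
  · rintro ⟨Z, A, j, rfl⟩
    exact ⟨_, _, Z.isOFrame_comp A j⟩
end

section
/- A bounded operator T ∈ L(X,W) admits a UO-frame (unconditional operator frame) if and only if T factors through a Banach space with an unconditional basis. -/
/-!
If `T = j ∘ A` factors through `Z` with basis `(e_k, e*_k)`, then `(e*_k ∘ A, j e_k)` is a
UO-frame for `T`. Conversely, given a UO-frame `(x'_k, w_k)`, pass to the nonzero vectors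
`v_k = (w_k, c_k) ∈ W × ℝ`, with weights `c_k > 0` so small that `∑ x'_k(x) c_k` still converges.
Norm the finitely supported sequences by `‖a‖ = sup_S ‖∑_{k ∈ S} a_k v_k‖`, `S` ranging over all
subsets of `ℕ`, and let `Z` be the completion. The restrictions to finite sets are contractions,
so the unit vectors form an unconditional basis of `Z`; summation `Z → W` is bounded; and
unconditional convergence of `∑ x'_k(x) w_k` is exactly convergence of `∑ x'_k(x) e_k` in `Z`,
which by Banach–Steinhaus defines a bounded `A : X → Z`.
-/

open Filter Topology

/-- UO-frame (unconditional operator frame): for every `x`, the series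
`∑ ⟨x'_k, x⟩ w_k` converges unconditionally (i.e. is summable) to `T x`. -/
def IsUOFrame {X W : Type*} [NormedAddCommGroup X] [NormedSpace ℝ X]
    [NormedAddCommGroup W] [NormedSpace ℝ W]
    (T : X →L[ℝ] W) (x' : ℕ → (X →L[ℝ] ℝ)) (w : ℕ → W) : Prop :=
  ∀ x : X, HasSum (fun k => x' k x • w k) (T x)

/-- A Banach space together with an unconditional basis. -/
structure BanachWithUnconditionalBasis where
  carrier : Type
  [grp : NormedAddCommGroup carrier]
  [mod : NormedSpace ℝ carrier]
  [compl : CompleteSpace carrier]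
  vec : ℕ → carrier
  coord : ℕ → carrier →L[ℝ] ℝ
  biorth : ∀ k j, coord k (vec j) = if k = j then 1 else 0
  expand : ∀ z : carrier, HasSum (fun k => coord k z • vec k) z

attribute [instance] BanachWithUnconditionalBasis.grp BanachWithUnconditionalBasis.mod
  BanachWithUnconditionalBasis.compl

open scoped ENNReal

abbrev SubsetSums (V : Type*) [NormedAddCommGroup V] : Type _ := ↥(lp (fun _ : Set ℕ => V) ∞)

namespace SubsetSums

open Classical

variable {V : Type*} [NormedAddCommGroup V]

lemma norm_apply_le (b : SubsetSums V) (S : Set ℕ) : ‖b S‖ ≤ ‖b‖ :=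
  lp.norm_apply_le_norm ENNReal.top_ne_zero b S

variable [NormedSpace ℝ V]

noncomputable def eval (S : Set ℕ) : SubsetSums V →L[ℝ] V :=
  LinearMap.mkContinuous
    { toFun := fun b => b S, map_add' := fun _ _ => rfl, map_smul' := fun _ _ => rfl } 1
    fun b => (norm_apply_le b S).trans_eq (one_mul _).symm

@[simp] lemma eval_apply (S : Set ℕ) (b : SubsetSums V) : eval S b = b S := rfl

noncomputable def single (k : ℕ) : V →L[ℝ] SubsetSums V :=
  LinearMap.mkContinuous
    { toFun := fun y => ⟨fun S => if k ∈ S then y else 0, memℓp_infty ⟨‖y‖, by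
        rintro - ⟨S, rfl⟩; by_cases hk : k ∈ S <;> simp [hk]⟩⟩
      map_add' := fun y z => by
        ext S; change _ = (if k ∈ S then y else 0) + (if k ∈ S then z else 0)
        by_cases hk : k ∈ S <;> simp [hk]
      map_smul' := fun r y => by ext S; by_cases hk : k ∈ S <;> simp [hk] } 1
    fun y => (lp.norm_le_of_forall_le (norm_nonneg y) fun S => by
        by_cases hk : k ∈ S <;> simp [hk]).trans_eq (one_mul _).symm

@[simp] lemma single_apply (k : ℕ) (y : V) (S : Set ℕ) :
    single k y S = if k ∈ S then y else 0 := rfl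

noncomputable def restrict (F : Set ℕ) : SubsetSums V →L[ℝ] SubsetSums V :=
  LinearMap.mkContinuous
    { toFun := fun b => ⟨fun S => b (S ∩ F), memℓp_infty ⟨‖b‖, by
        rintro - ⟨S, rfl⟩; exact norm_apply_le b _⟩⟩
      map_add' := fun _ _ => rfl
      map_smul' := fun _ _ => rfl } 1
    fun b => by
      rw [one_mul]; exact lp.norm_le_of_forall_le (norm_nonneg b) fun S => norm_apply_le b (S ∩ F)

@[simp] lemma restrict_apply (F S : Set ℕ) (b : SubsetSums V) : restrict F b S = b (S ∩ F) :=
  rfl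

lemma norm_restrict_le (F : Set ℕ) (b : SubsetSums V) : ‖restrict F b‖ ≤ ‖b‖ :=
  lp.norm_le_of_forall_le (norm_nonneg b) fun _ => norm_apply_le b _

lemma restrict_single (F : Set ℕ) (k : ℕ) (y : V) :
    restrict F (single k y) = if k ∈ F then single k y else 0 := by
  ext S
  by_cases hk : k ∈ F <;> simp [hk]

lemma norm_sum_single_le {f : ℕ → V} {t : Finset ℕ} {ε : ℝ} (hε : 0 ≤ ε)
    (h : ∀ s ⊆ t, ‖∑ k ∈ s, f k‖ ≤ ε) : ‖∑ k ∈ t, single k (f k)‖ ≤ ε := by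
  refine lp.norm_le_of_forall_le hε fun S => ?_
  rw [← eval_apply, map_sum]
  simpa [Finset.sum_ite] using h (t.filter (· ∈ S)) (Finset.filter_subset _ _)

lemma summable_single [CompleteSpace V] {f : ℕ → V} (hf : Summable f) :
    Summable fun k => single k (f k) := by
  refine summable_iff_vanishing_norm.2 fun ε hε => ?_
  obtain ⟨s, hs⟩ := summable_iff_vanishing_norm.1 hf (ε / 2) (half_pos hε)
  exact ⟨s, fun t ht => (norm_sum_single_le (half_pos hε).le fun u hu =>
    (hs u (ht.mono_left hu)).le).trans_lt (half_lt_self hε)⟩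

end SubsetSums

theorem hasSum_of_biorthogonal_of_dense_span {Z : Type*} [NormedAddCommGroup Z] [NormedSpace ℝ Z]
    {e : ℕ → Z} {f : ℕ → Z →L[ℝ] ℝ} (hfe : ∀ k j, f k (e j) = if k = j then 1 else 0)
    (hdense : Dense (Submodule.span ℝ (Set.range e) : Set Z)) {C : ℝ}
    (hP : ∀ (F : Finset ℕ) z, ‖∑ k ∈ F, f k z • e k‖ ≤ C * ‖z‖) (z : Z) :
    HasSum (fun k => f k z • e k) z := by
  set P : Finset ℕ → Z →L[ℝ] Z := fun F => ∑ k ∈ F, (f k).smulRight (e k)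
  have hP_apply : ∀ F z, P F z = ∑ k ∈ F, f k z • e k := by simp [P]
  have hequi : Equicontinuous fun F => ⇑(P F) := by
    have h := (NormedSpace.equicontinuous_TFAE P).out 3 1
    exact h.mp ⟨C, by simpa only [hP_apply] using hP⟩
  have hspan : ∀ z ∈ Submodule.span ℝ (Set.range e), (fun F => P F z) =ᶠ[atTop] fun _ => z := by
    intro z hz
    induction hz using Submodule.span_induction with
    | mem _ hz =>
      obtain ⟨j, rfl⟩ := hz
      filter_upwards [eventually_ge_atTop {j}] with F hF
      simp [hP_apply, hfe, ite_smul, Finset.singleton_subset_iff.1 hF]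
    | zero => exact .of_forall fun F => map_zero _
    | add x y _ _ hx hy => filter_upwards [hx, hy] with F hFx hFy; rw [map_add, hFx, hFy]
    | smul r x _ hx => filter_upwards [hx] with F hF; rw [map_smul, hF]
  have hclosed : IsClosed {z | Tendsto (fun F => P F z) atTop (𝓝 z)} :=
    hequi.isClosed_setOfPred_tendsto continuous_id
  have hall := hclosed.closure_subset_iff.2 fun z hz =>
    tendsto_const_nhds.congr' (hspan z hz).symm
  have hz := hall (hdense.closure_eq ▸ Set.mem_univ z)
  simp only [Set.mem_ofPred_eq, hP_apply] at hz
  exact hz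

section

variable {V : Type*} [NormedAddCommGroup V] [NormedSpace ℝ V]

def SeqSpace₀ (_v : ℕ → V) : Type := ℕ →₀ ℝ

namespace SeqSpace₀

variable (v : ℕ → V)

noncomputable instance : AddCommGroup (SeqSpace₀ v) := inferInstanceAs (AddCommGroup (ℕ →₀ ℝ))
noncomputable instance : Module ℝ (SeqSpace₀ v) := inferInstanceAs (Module ℝ (ℕ →₀ ℝ))

noncomputable def toSubsetSums : SeqSpace₀ v →ₗ[ℝ] SubsetSums V :=
  Finsupp.linearCombination ℝ fun k => SubsetSums.single k (v k)

noncomputable instance : SeminormedAddCommGroup (SeqSpace₀ v) :=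
  SeminormedAddCommGroup.induced _ _ (toSubsetSums v)

noncomputable instance : NormedSpace ℝ (SeqSpace₀ v) :=
  NormedSpace.induced ℝ _ _ (toSubsetSums v)

noncomputable def toSubsetSumsₗᵢ : SeqSpace₀ v →ₗᵢ[ℝ] SubsetSums V :=
  ⟨toSubsetSums v, fun _ => rfl⟩

noncomputable def basis (k : ℕ) : SeqSpace₀ v := Finsupp.single k 1

lemma toSubsetSums_basis (k : ℕ) : toSubsetSums v (basis v k) = SubsetSums.single k (v k) :=
  (Finsupp.linearCombination_single ℝ _ _).trans (one_smul ℝ _)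

end SeqSpace₀

-- A completion rather than the closure of the image in `SubsetSums V`: the carrier of a
-- `BanachWithUnconditionalBasis` has to live in `Type`, while `V` may not.
abbrev SeqSpace (v : ℕ → V) : Type := UniformSpace.Completion (SeqSpace₀ v)

namespace SeqSpace

open UniformSpace

variable (v : ℕ → V)

noncomputable def basis (k : ℕ) : SeqSpace v := SeqSpace₀.basis v k

lemma dense_span_basis : Dense (Submodule.span ℝ (Set.range (basis v)) : Set (SeqSpace v)) := by
  have hrange : Set.range (basis v) =
      (Completion.toComplL : SeqSpace₀ v →L[ℝ] SeqSpace v).toLinearMap ''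
        Set.range (SeqSpace₀.basis v) := by
    rw [← Set.range_comp]; rfl
  have hspan : Submodule.span ℝ (Set.range (SeqSpace₀.basis v)) = ⊤ :=
    Finsupp.basisSingleOne.span_eq
  rw [hrange, Submodule.span_image, hspan, Submodule.map_top, LinearMap.coe_range]
  exact Completion.denseRange_coe

variable [CompleteSpace V]

noncomputable def toSubsetSums : SeqSpace v →L[ℝ] SubsetSums V :=
  (SeqSpace₀.toSubsetSumsₗᵢ v).toContinuousLinearMap.fromCompletion

lemma norm_toSubsetSums (z : SeqSpace v) : ‖toSubsetSums v z‖ = ‖z‖ :=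
  (SeqSpace₀.toSubsetSumsₗᵢ v).isometry.completion_extension.norm_map_of_map_zero
    (map_zero (toSubsetSums v)) z

lemma toSubsetSums_basis (k : ℕ) : toSubsetSums v (basis v k) = SubsetSums.single k (v k) := by
  simp [toSubsetSums, basis, SeqSpace₀.toSubsetSumsₗᵢ, SeqSpace₀.toSubsetSums_basis]

noncomputable def sum : SeqSpace v →L[ℝ] V := (SubsetSums.eval Set.univ).comp (toSubsetSums v)

lemma sum_basis (k : ℕ) : sum v (basis v k) = v k := by
  simp [sum, toSubsetSums_basis]

variable {v}

noncomputable def coord (hv : ∀ k, v k ≠ 0) (k : ℕ) : SeqSpace v →L[ℝ] ℝ :=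
  (SeparatingDual.exists_eq_one (hv k)).choose.comp ((SubsetSums.eval {k}).comp (toSubsetSums v))

lemma coord_basis (hv : ∀ k, v k ≠ 0) (k j : ℕ) :
    coord hv k (basis v j) = if k = j then 1 else 0 := by
  by_cases hkj : k = j
  · subst hkj
    simpa [coord, toSubsetSums_basis] using (SeparatingDual.exists_eq_one (hv k)).choose_spec
  · simp [coord, toSubsetSums_basis, hkj, Ne.symm hkj]

lemma norm_sum_coord_smul_basis_le (hv : ∀ k, v k ≠ 0) (F : Finset ℕ) (z : SeqSpace v) :
    ‖∑ k ∈ F, coord hv k z • basis v k‖ ≤ ‖z‖ := by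
  set P : SeqSpace v →L[ℝ] SeqSpace v := ∑ k ∈ F, (coord hv k).smulRight (basis v k)
  have hP : (toSubsetSums v).comp P = (SubsetSums.restrict ↑F).comp (toSubsetSums v) := by
    refine ContinuousLinearMap.ext_on (dense_span_basis v) ?_
    rintro - ⟨j, rfl⟩
    by_cases hj : j ∈ F <;>
      simp [P, coord_basis, toSubsetSums_basis, SubsetSums.restrict_single, hj]
  calc ‖∑ k ∈ F, coord hv k z • basis v k‖ = ‖SubsetSums.restrict ↑F (toSubsetSums v z)‖ := by
        rw [← norm_toSubsetSums, ← ContinuousLinearMap.comp_apply, ← hP]; simp [P]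
    _ ≤ ‖z‖ := (SubsetSums.norm_restrict_le _ _).trans_eq (norm_toSubsetSums v z)

lemma hasSum_coord_smul_basis (hv : ∀ k, v k ≠ 0) (z : SeqSpace v) :
    HasSum (fun k => coord hv k z • basis v k) z :=
  hasSum_of_biorthogonal_of_dense_span (coord_basis hv) (dense_span_basis v) (C := 1)
    (fun F z => (norm_sum_coord_smul_basis_le hv F z).trans_eq (one_mul _).symm) z

lemma summable_smul_basis {a : ℕ → ℝ} (ha : Summable fun k => a k • v k) :
    Summable fun k => a k • basis v k := by
  refine (summable_iff_vanishing_norm (E := SeqSpace v)).2 fun ε hε => ?_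
  obtain ⟨s, hs⟩ :=
    (summable_iff_vanishing_norm (E := SubsetSums V)).1 (SubsetSums.summable_single ha) ε hε
  refine ⟨s, fun t ht => ?_⟩
  rw [← norm_toSubsetSums v]
  simpa only [map_sum, map_smul, toSubsetSums_basis] using hs t ht

noncomputable def toBanachWithUnconditionalBasis (hv : ∀ k, v k ≠ 0) :
    BanachWithUnconditionalBasis where
  carrier := SeqSpace v
  vec := basis v
  coord := coord hv
  biorth := coord_basis hv
  expand := hasSum_coord_smul_basis hv

end SeqSpace

end

theorem exists_continuousLinearMap_hasSum {X Z : Type*}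
    [NormedAddCommGroup X] [NormedSpace ℝ X] [CompleteSpace X]
    [NormedAddCommGroup Z] [NormedSpace ℝ Z]
    {x' : ℕ → X →L[ℝ] ℝ} {e : ℕ → Z} (h : ∀ x, Summable fun k => x' k x • e k) :
    ∃ A : X →L[ℝ] Z, ∀ x, HasSum (fun k => x' k x • e k) (A x) := by
  have hlim : Tendsto (fun F x => (∑ k ∈ F, (x' k).smulRight (e k)) x) atTop
      (𝓝 fun x => ∑' k, x' k x • e k) :=
    tendsto_pi_nhds.2 fun x => by
      simp only [FunLike.coe_sum, Finset.sum_apply, ContinuousLinearMap.smulRight_apply]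
      exact (h x).hasSum
  exact ⟨continuousLinearMapOfTendsto _ hlim, fun x => (h x).hasSum⟩

section Frame

variable {X : Type*} [NormedAddCommGroup X] [NormedSpace ℝ X]

noncomputable def dualWeight (x' : ℕ → X →L[ℝ] ℝ) (k : ℕ) : ℝ := (2 ^ k * (1 + ‖x' k‖))⁻¹

lemma dualWeight_pos (x' : ℕ → X →L[ℝ] ℝ) (k : ℕ) : 0 < dualWeight x' k := by
  unfold dualWeight; positivity

lemma summable_apply_mul_dualWeight (x' : ℕ → X →L[ℝ] ℝ) (x : X) :
    Summable fun k => x' k x * dualWeight x' k := by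
  refine Summable.of_norm_bounded ((summable_geometric_two).mul_left ‖x‖) fun k => ?_
  have hk : 0 < 2 ^ k * (1 + ‖x' k‖) := by positivity
  rw [norm_mul, Real.norm_of_nonneg (dualWeight_pos x' k).le, dualWeight, ← div_eq_mul_inv,
    div_le_iff₀ hk]
  calc ‖x' k x‖ ≤ ‖x' k‖ * ‖x‖ := (x' k).le_opNorm x
    _ ≤ ‖x‖ * (1 + ‖x' k‖) := by nlinarith [norm_nonneg x]
    _ = ‖x‖ * (1 / 2) ^ k * (2 ^ k * (1 + ‖x' k‖)) := by
        rw [mul_assoc ‖x‖, ← mul_assoc ((1 / 2) ^ k), ← mul_pow]; norm_num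

end Frame

theorem BanachWithUnconditionalBasis.isUOFrame_comp {X W : Type*}
    [NormedAddCommGroup X] [NormedSpace ℝ X] [NormedAddCommGroup W] [NormedSpace ℝ W]
    (Z : BanachWithUnconditionalBasis) (A : X →L[ℝ] Z.carrier) (j : Z.carrier →L[ℝ] W) :
    IsUOFrame (j.comp A) (fun k => (Z.coord k).comp A) (fun k => j (Z.vec k)) := fun x => by
  simpa using (Z.expand (A x)).mapL j

theorem IsUOFrame.exists_factorization {X W : Type*}
    [NormedAddCommGroup X] [NormedSpace ℝ X] [CompleteSpace X]
    [NormedAddCommGroup W] [NormedSpace ℝ W] [CompleteSpace W]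
    {T : X →L[ℝ] W} {x' : ℕ → X →L[ℝ] ℝ} {w : ℕ → W} (hT : IsUOFrame T x' w) :
    ∃ (Z : BanachWithUnconditionalBasis) (A : X →L[ℝ] Z.carrier) (j : Z.carrier →L[ℝ] W),
      T = j.comp A := by
  set v : ℕ → W × ℝ := fun k => (w k, dualWeight x' k)
  have hv : ∀ k, v k ≠ 0 := fun k h => (dualWeight_pos x' k).ne' (congrArg Prod.snd h)
  have hsum : ∀ x, Summable fun k => x' k x • v k := fun x =>
    ((hT x).prodMk (summable_apply_mul_dualWeight x' x).hasSum).summable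
  obtain ⟨A, hA⟩ :=
    exists_continuousLinearMap_hasSum fun x => SeqSpace.summable_smul_basis (hsum x)
  refine ⟨SeqSpace.toBanachWithUnconditionalBasis hv, A,
    (ContinuousLinearMap.fst ℝ W ℝ).comp (SeqSpace.sum v), ?_⟩
  ext x
  have h := (hA x).mapL ((ContinuousLinearMap.fst ℝ W ℝ).comp (SeqSpace.sum v))
  simp only [ContinuousLinearMap.comp_apply, map_smul, SeqSpace.sum_basis,
    ContinuousLinearMap.coe_fst', v] at h
  exact (hT x).unique h

/-- A bounded operator admits a UO-frame iff it factors through a Banach space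
with an unconditional basis. -/
theorem uoframe_iff_factors_through_unconditional_basis {X W : Type*}
    [NormedAddCommGroup X] [NormedSpace ℝ X] [CompleteSpace X]
    [NormedAddCommGroup W] [NormedSpace ℝ W] [CompleteSpace W]
    (T : X →L[ℝ] W) :
    (∃ (x' : ℕ → (X →L[ℝ] ℝ)) (w : ℕ → W), IsUOFrame T x' w) ↔
    (∃ (Z : BanachWithUnconditionalBasis) (A : X →L[ℝ] Z.carrier)
        (j : Z.carrier →L[ℝ] W), T = j.comp A) := by
  constructor
  · rintro ⟨x', w, hT⟩
    exact hT.exists_factorization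
  · rintro ⟨Z, A, j, rfl⟩
    exact ⟨_, _, Z.isUOFrame_comp A j⟩
end

section
/- Let A : E → E be the identity on a finite-dimensional normed space E of dimension m ≥ 1. Then there exist rank-one operators B_1,…,B_m : E → E with ‖B_j‖ = 1 for each j and ∑_{j=1}^m B_j = id_E; moreover, setting C_i := (1/m) B_j for i = r m + j (r = 0,…,m−1, j = 1,…,m), one has ∑_{i=1}^{m²} C_i = id_E and ‖∑_{i=1}^q C_i‖ ≤ 2 for every 1 ≤ q ≤ m². -/
/-!
Choose unit vectors `v₁, …, vₘ` maximizing `|det (v₁, …, vₘ)|`. By Cramer's rule the `j`-th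
coordinate of `x` in the basis `v` is `det (v with vⱼ replaced by x) / det v`, and maximality
bounds this by `‖x‖`; so the coordinate functionals have norm one, and the identity is the sum of
the norm-one rank-one maps `x ↦ vⱼ*(x) vⱼ`. In the subdivided sum, a partial sum of length `q`
consists of `⌊q/m⌋ ≤ m` full periods, each equal to `id / m`, plus fewer than `m` operators of
norm `1/m`.
-/

open Finset

theorem MultilinearMap.norm_apply_update_le_of_isMaxOn {𝕜 E ι : Type*} [RCLike 𝕜]
    [NormedAddCommGroup E] [NormedSpace 𝕜 E] [DecidableEq ι]
    (f : MultilinearMap 𝕜 (fun _ : ι => E) 𝕜) {v : ι → E}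
    (hmax : IsMaxOn (‖f ·‖) (Set.univ.pi fun _ => Metric.sphere 0 1) v)
    (hv : ∀ i, ‖v i‖ = 1) (j : ι) (x : E) :
    ‖f (Function.update v j x)‖ ≤ ‖x‖ * ‖f v‖ := by
  rcases eq_or_ne x 0 with rfl | hx
  · simp
  set u : E := (‖x‖⁻¹ : 𝕜) • x
  have hu : Function.update v j u ∈ Set.univ.pi fun _ => Metric.sphere (0 : E) 1 := by
    intro i _
    rcases eq_or_ne i j with rfl | hij
    · simp [u, norm_smul, hx]
    · simp [Function.update_of_ne hij, hv i]
  have hxu : x = (‖x‖ : 𝕜) • u := by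
    simp [u, smul_smul, hx]
  calc ‖f (Function.update v j x)‖ = ‖x‖ * ‖f (Function.update v j u)‖ := by
        rw [hxu, f.map_update_smul, norm_smul, ← hxu]; simp
    _ ≤ ‖x‖ * ‖f v‖ := by gcongr; exact hmax hu

namespace Module.Basis

variable {𝕜 E ι : Type*}

structure IsAuerbach [NormedField 𝕜] [NormedAddCommGroup E] [NormedSpace 𝕜 E]
    (v : Basis ι 𝕜 E) : Prop where
  norm_eq_one : ∀ i, ‖v i‖ = 1
  norm_coord_le : ∀ i x, ‖v.coord i x‖ ≤ ‖x‖

section Normed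

variable [NontriviallyNormedField 𝕜] [CompleteSpace 𝕜] [NormedAddCommGroup E] [NormedSpace 𝕜 E]
  [FiniteDimensional 𝕜 E] [Fintype ι]

theorem continuous_det [DecidableEq ι] (b : Basis ι 𝕜 E) : Continuous b.det := by
  have : Continuous b.toMatrixEquiv := b.toMatrixEquiv.toLinearMap.continuous_of_finiteDimensional
  exact this.matrix_det.congr fun v => (b.det_apply v).symm

theorem sum_toContinuousLinearMap_coord_smulRight (v : Basis ι 𝕜 E) :
    ∑ i, (LinearMap.toContinuousLinearMap (v.coord i)).smulRight (v i) =
      ContinuousLinearMap.id 𝕜 E := by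
  ext x
  simp [v.sum_repr]

end Normed

section RCLike

variable [RCLike 𝕜] [NormedAddCommGroup E] [NormedSpace 𝕜 E]

theorem exists_isAuerbach [Fintype ι] (b : Basis ι 𝕜 E) : ∃ v : Basis ι 𝕜 E, v.IsAuerbach := by
  classical
  have : FiniteDimensional 𝕜 E := .of_basis b
  have : ProperSpace E := FiniteDimensional.proper_rclike 𝕜 E
  set S : Set (ι → E) := Set.univ.pi fun _ => Metric.sphere 0 1
  have hunit : ∀ i, IsUnit ((‖b i‖⁻¹ : ℝ) : 𝕜) := fun i => by simp [b.ne_zero i]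
  have hb₀ : ⇑(b.isUnitSMul hunit) ∈ S := fun i _ => by
    simp [isUnitSMul_apply, b.ne_zero i]
  obtain ⟨v, hvS, hmax⟩ := (isCompact_univ_pi fun _ => isCompact_sphere (0 : E) 1).exists_isMaxOn
    ⟨_, hb₀⟩ b.continuous_det.norm.continuousOn
  have hv : ∀ i, ‖v i‖ = 1 := fun i => by simpa using hvS i (Set.mem_univ i)
  have hdet : b.det v ≠ 0 := by
    have := (b.isUnit_det (b.isUnitSMul hunit)).ne_zero
    exact norm_ne_zero_iff.1 (ne_of_gt ((norm_pos_iff.2 this).trans_le (hmax hb₀)))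
  obtain ⟨hli, hsp⟩ := b.is_basis_iff_det.2 (isUnit_iff_ne_zero.2 hdet)
  refine ⟨.mk hli hsp.ge, fun i => by simp [hv], fun j x => ?_⟩
  have hcramer := congr($(b.det_smul_mk_coord_eq_det_update hli hsp.ge j) x)
  simp only [LinearMap.smul_apply, MultilinearMap.toLinearMap_apply, smul_eq_mul] at hcramer
  have hle := b.det.toMultilinearMap.norm_apply_update_le_of_isMaxOn hmax hv j x
  rw [← hcramer, norm_mul, mul_comm] at hle
  exact le_of_mul_le_mul_right hle (norm_pos_iff.2 hdet)

theorem IsAuerbach.norm_toContinuousLinearMap_coord [FiniteDimensional 𝕜 E] {v : Basis ι 𝕜 E}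
    (hv : v.IsAuerbach) (i : ι) :
    ‖LinearMap.toContinuousLinearMap (v.coord i)‖ = 1 := by
  refine le_antisymm (ContinuousLinearMap.opNorm_le_bound _ zero_le_one fun x => ?_) ?_
  · simpa using hv.norm_coord_le i x
  · simpa [hv.norm_eq_one i] using (LinearMap.toContinuousLinearMap (v.coord i)).le_opNorm (v i)

theorem IsAuerbach.norm_coord_smulRight [FiniteDimensional 𝕜 E] {v : Basis ι 𝕜 E}
    (hv : v.IsAuerbach) (i : ι) :
    ‖(LinearMap.toContinuousLinearMap (v.coord i)).smulRight (v i)‖ = 1 := by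
  rw [ContinuousLinearMap.norm_smulRight_apply, hv.norm_toContinuousLinearMap_coord,
    hv.norm_eq_one, one_mul]

end RCLike

end Module.Basis

theorem Finset.sum_range_mod {M : Type*} [AddCommMonoid M] (f : ℕ → M) (m q : ℕ) :
    ∑ i ∈ range q, f (i % m) = (q / m) • ∑ j ∈ range m, f j + ∑ j ∈ range (q % m), f j := by
  have hperiod : ∀ r, ∑ i ∈ range (m * r), f (i % m) = r • ∑ j ∈ range m, f j := by
    intro r
    induction r with
    | zero => simp
    | succ r ih =>
      rw [Nat.mul_succ, sum_range_add, ih, succ_nsmul]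
      congr 1
      refine sum_congr rfl fun i hi => ?_
      rw [Nat.mul_add_mod, Nat.mod_eq_of_lt (mem_range.1 hi)]
  conv_lhs => rw [← Nat.div_add_mod q m, sum_range_add, hperiod]
  congr 1
  refine sum_congr rfl fun i hi => ?_
  rw [Nat.mul_add_mod]
  rcases Nat.eq_zero_or_pos m with rfl | hm
  · rw [Nat.mod_zero]
  · rw [Nat.mod_eq_of_lt ((mem_range.1 hi).trans (Nat.mod_lt q hm))]

theorem sum_range_sq_inv_smul_mod {F : Type*} [AddCommGroup F] [Module ℝ F] (B : ℕ → F) (m : ℕ) :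
    ∑ i ∈ range (m ^ 2), (m : ℝ)⁻¹ • B (i % m) = ∑ j ∈ range m, B j := by
  rcases Nat.eq_zero_or_pos m with rfl | hm
  · simp
  rw [sum_range_mod (fun j => (m : ℝ)⁻¹ • B j), ← smul_sum, sq, Nat.mul_div_cancel _ hm,
    Nat.mul_mod_left, range_zero, sum_empty, add_zero, ← Nat.cast_smul_eq_nsmul ℝ, smul_smul,
    mul_inv_cancel₀ (Nat.cast_ne_zero.2 hm.ne'), one_smul]

theorem norm_sum_range_inv_smul_mod_le {F : Type*} [SeminormedAddCommGroup F] [NormedSpace ℝ F]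
    (B : ℕ → F) {m : ℕ} (hB : ∀ j < m, ‖B j‖ ≤ 1) {q : ℕ} (hq : q ≤ m ^ 2) :
    ‖∑ i ∈ range q, (m : ℝ)⁻¹ • B (i % m)‖ ≤ ‖∑ j ∈ range m, B j‖ + 1 := by
  rcases Nat.eq_zero_or_pos m with rfl | hm
  · simp_all
  have hdiv : (q / m : ℕ) / (m : ℝ) ≤ 1 :=
    div_le_one_of_le₀ (by exact_mod_cast Nat.div_le_of_le_mul (sq m ▸ hq)) (Nat.cast_nonneg m)
  have hrem : ‖∑ j ∈ range (q % m), (m : ℝ)⁻¹ • B j‖ ≤ 1 :=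
    calc ‖∑ j ∈ range (q % m), (m : ℝ)⁻¹ • B j‖
        ≤ ∑ j ∈ range (q % m), (m : ℝ)⁻¹ := by
          refine norm_sum_le_of_le _ fun j hj => ?_
          rw [norm_smul, Real.norm_of_nonneg (by positivity)]
          exact mul_le_of_le_one_right (by positivity)
            (hB j ((mem_range.1 hj).trans (Nat.mod_lt q hm)))
      _ = (q % m : ℕ) / (m : ℝ) := by simp [div_eq_mul_inv]
      _ ≤ 1 := div_le_one_of_le₀ (by exact_mod_cast (Nat.mod_lt q hm).le) (Nat.cast_nonneg m)
  rw [sum_range_mod (fun j => (m : ℝ)⁻¹ • B j), ← smul_sum, ← Nat.cast_smul_eq_nsmul ℝ, smul_smul,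
    ← div_eq_mul_inv]
  refine (norm_add_le _ _).trans (add_le_add ?_ hrem)
  rw [norm_smul, Real.norm_of_nonneg (by positivity)]
  exact mul_le_of_le_one_left (norm_nonneg _) hdiv

theorem auerbach_decomposition_of_id_general {E : Type*}
    [NormedAddCommGroup E] [NormedSpace ℝ E] [FiniteDimensional ℝ E]
    (m : ℕ) (hdim : Module.finrank ℝ E = m) :
    ∃ B : ℕ → (E →L[ℝ] E),
      (∀ j < m, ∃ (e' : E →L[ℝ] ℝ) (e : E), B j = e'.smulRight e) ∧
      (∀ j < m, ‖B j‖ = 1) ∧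
      (∑ j ∈ Finset.range m, B j = ContinuousLinearMap.id ℝ E) ∧
      -- the subdivided operators C_i := (1/m) • B (i % m)
      ((∑ i ∈ Finset.range (m ^ 2), ((m : ℝ)⁻¹) • B (i % m))
          = ContinuousLinearMap.id ℝ E) ∧
      (∀ q, 1 ≤ q → q ≤ m ^ 2 →
        ‖∑ i ∈ Finset.range q, ((m : ℝ)⁻¹) • B (i % m)‖ ≤ 2) := by
  obtain ⟨v, hv⟩ := (Module.finBasisOfFinrankEq ℝ E hdim).exists_isAuerbach
  let P : Fin m → E →L[ℝ] E := fun j =>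
    (LinearMap.toContinuousLinearMap (v.coord j)).smulRight (v j)
  let B : ℕ → E →L[ℝ] E := fun j => if h : j < m then P ⟨j, h⟩ else 0
  have hBP : ∀ j (h : j < m), B j = P ⟨j, h⟩ := fun j h => dif_pos h
  have hnorm : ∀ j < m, ‖B j‖ = 1 := fun j h => (hBP j h).symm ▸ hv.norm_coord_smulRight _
  have hsum : ∑ j ∈ range m, B j = ContinuousLinearMap.id ℝ E := by
    rw [← Fin.sum_univ_eq_sum_range, ← v.sum_toContinuousLinearMap_coord_smulRight]
    exact sum_congr rfl fun j _ => hBP j j.isLt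
  refine ⟨B, fun j h => ⟨_, _, hBP j h⟩, hnorm, hsum, ?_, fun q _ hq => ?_⟩
  · rw [sum_range_sq_inv_smul_mod, hsum]
  · calc _ ≤ ‖∑ j ∈ range m, B j‖ + 1 :=
          norm_sum_range_inv_smul_mod_le B (fun j h => (hnorm j h).le) hq
      _ ≤ 1 + 1 := by rw [hsum]; gcongr; exact ContinuousLinearMap.norm_id_le
      _ = 2 := one_add_one_eq_two

/-- Auerbach-basis decomposition of the identity of an `m`-dimensional normed space
into rank-one operators of norm one, together with the subdivision `C_i = (1/m) B_{i mod m}`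
whose partial sums have norm at most `2`. -/
theorem auerbach_decomposition_of_id {E : Type*}
    [NormedAddCommGroup E] [NormedSpace ℝ E] [FiniteDimensional ℝ E]
    (m : ℕ) (hm : 1 ≤ m) (hdim : Module.finrank ℝ E = m) :
    ∃ B : ℕ → (E →L[ℝ] E),
      (∀ j < m, ∃ (e' : E →L[ℝ] ℝ) (e : E), B j = e'.smulRight e) ∧
      (∀ j < m, ‖B j‖ = 1) ∧
      (∑ j ∈ Finset.range m, B j = ContinuousLinearMap.id ℝ E) ∧
      -- the subdivided operators C_i := (1/m) • B (i % m)
      ((∑ i ∈ Finset.range (m ^ 2), ((m : ℝ)⁻¹) • B (i % m))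
          = ContinuousLinearMap.id ℝ E) ∧
      (∀ q, 1 ≤ q → q ≤ m ^ 2 →
        ‖∑ i ∈ Finset.range q, ((m : ℝ)⁻¹) • B (i % m)‖ ≤ 2) :=
  auerbach_decomposition_of_id_general m hdim
end

section
/- Let X, W be Banach spaces and T ∈ L(X,W). If there exists a sequence (S_N) of finite-rank operators X → W with S_N x → T x for every x ∈ X and sup_N ‖S_N‖ < ∞, then T admits an O-frame: there exist rank-one operators à _s = x'_s ⊗ w_s such that Tx = ∑_{s=1}^∞ ⟨x'_s, x⟩ w_s for every x ∈ X, with the partial-sum operators uniformly bounded by 5·sup_N ‖S_N‖ (when ‖T‖ = 1, C = sup‖S_N‖). -/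
open Filter Topology

/-- A continuous linear map has finite rank if its range is finite-dimensional. -/
def IsFiniteRank {X W : Type*} [NormedAddCommGroup X] [NormedSpace ℝ X]
    [NormedAddCommGroup W] [NormedSpace ℝ W] (R : X →L[ℝ] W) : Prop :=
  FiniteDimensional ℝ (LinearMap.range (R : X →ₗ[ℝ] W))

/-!
Write `T` as the strong sum of the finite-rank increments `A p = S p - S (p - 1)`; their partial
sums are bounded by `C`, so `‖A p‖ ≤ 2C`. Each `A p` is a finite sum `u₀ + ⋯ + u_{n-1}` of rank-one
operators. Running `m` times through the cycle `u₀/m, …, u_{n-1}/m`, every partial sum of this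
block is `(k/m) • A p` plus less than one cycle, of norm `≤ ∑ ‖uᵢ‖ / m ≤ ‖A p‖ / (p + 1)` once `m`
is large. Concatenating the blocks, each partial sum of the series is
`∑_{q<p} A q + (k/m) • A p + (error)`, of norm at most `C + 2C + 2C`, and it tends to `T x`
because `A p x → 0` and the error tends to `0` in operator norm.
-/

open Finset

theorem sum_range_comp_mod {M : Type*} [AddCommMonoid M] (u : ℕ → M) (n r : ℕ) :
    ∑ s ∈ range r, u (s % n) = (r / n) • ∑ i ∈ range n, u i + ∑ i ∈ range (r % n), u i := by
  obtain rfl | hn := n.eq_zero_or_pos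
  · simp
  have shift : ∀ q j, j ≤ n → ∑ t ∈ range j, u ((n * q + t) % n) = ∑ t ∈ range j, u t :=
    fun q j hj ↦ sum_congr rfl fun t ht ↦ by
      rw [Nat.mul_add_mod, Nat.mod_eq_of_lt ((mem_range.1 ht).trans_le hj)]
  have full : ∀ q, ∑ s ∈ range (n * q), u (s % n) = q • ∑ i ∈ range n, u i := by
    intro q
    induction q with
    | zero => simp
    | succ q ih => rw [Nat.mul_succ, sum_range_add, ih, shift q n le_rfl, succ_nsmul]
  conv_lhs => rw [← Nat.div_add_mod r n]
  rw [sum_range_add, full, shift _ _ (Nat.mod_lt r hn).le]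

theorem exists_sum_range_cyclic_eq_and_norm_sub_smul_le {V : Type*} [SeminormedAddCommGroup V]
    [NormedSpace ℝ V] (u : ℕ → V) {n : ℕ} (hn : 0 < n) {η : ℝ} (hη : 0 < η) :
    ∃ m : ℕ, 0 < m ∧ ∑ t ∈ range (m * n), (m : ℝ)⁻¹ • u (t % n) = ∑ i ∈ range n, u i ∧
      ∀ r ≤ m * n, ∃ c ∈ Set.Icc (0 : ℝ) 1,
        ‖∑ t ∈ range r, (m : ℝ)⁻¹ • u (t % n) - c • ∑ i ∈ range n, u i‖ ≤ η := by
  obtain ⟨m, hm⟩ := exists_nat_gt ((∑ i ∈ range n, ‖u i‖) / η)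
  have hm_pos : (0 : ℝ) < m := (div_nonneg (sum_nonneg fun i _ ↦ norm_nonneg _) hη.le).trans_lt hm
  have hsum : ∀ r, ∑ t ∈ range r, (m : ℝ)⁻¹ • u (t % n) =
      ((r / n : ℕ) / m : ℝ) • ∑ i ∈ range n, u i + (m : ℝ)⁻¹ • ∑ i ∈ range (r % n), u i := by
    intro r
    rw [← smul_sum, sum_range_comp_mod, smul_add, ← Nat.cast_smul_eq_nsmul ℝ, smul_smul,
      inv_mul_eq_div]
  refine ⟨m, by exact_mod_cast hm_pos, ?_, fun r hr ↦ ⟨(r / n : ℕ) / m, ⟨by positivity, ?_⟩, ?_⟩⟩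
  · rw [hsum, Nat.mul_div_cancel _ hn, Nat.mul_mod_left, div_self hm_pos.ne']
    simp
  · exact div_le_one_of_le₀ (by exact_mod_cast Nat.div_le_of_le_mul (by linarith [hr]))
      hm_pos.le
  · rw [hsum, add_sub_cancel_left, norm_smul, norm_inv, RCLike.norm_natCast, inv_mul_le_iff₀ hm_pos]
    calc ‖∑ i ∈ range (r % n), u i‖ ≤ ∑ i ∈ range n, ‖u i‖ :=
          (norm_sum_le _ _).trans <| sum_le_sum_of_subset_of_nonneg
            (range_subset_range.2 (Nat.mod_lt r hn).le) fun i _ _ ↦ norm_nonneg _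
      _ ≤ m * η := ((div_lt_iff₀ hη).1 hm).le

namespace IsFiniteRank

variable {X W : Type*} [NormedAddCommGroup X] [NormedSpace ℝ X]
  [NormedAddCommGroup W] [NormedSpace ℝ W]

theorem zero : IsFiniteRank (0 : X →L[ℝ] W) := by
  rw [IsFiniteRank, ContinuousLinearMap.toLinearMap_zero, LinearMap.range_zero]
  infer_instance

theorem sub {R R' : X →L[ℝ] W} (hR : IsFiniteRank R) (hR' : IsFiniteRank R') :
    IsFiniteRank (R - R') := by
  have : FiniteDimensional ℝ (LinearMap.range (R : X →ₗ[ℝ] W)) := hR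
  have : FiniteDimensional ℝ (LinearMap.range (R' : X →ₗ[ℝ] W)) := hR'
  refine Submodule.finiteDimensional_of_le (S₂ := LinearMap.range (R : X →ₗ[ℝ] W) ⊔
      LinearMap.range (R' : X →ₗ[ℝ] W)) ?_
  rw [ContinuousLinearMap.toLinearMap_sub, sub_eq_add_neg, ← LinearMap.range_neg (R' : X →ₗ[ℝ] W)]
  exact LinearMap.range_add_le _ _

theorem exists_eq_sum_smulRight {A : X →L[ℝ] W} (hA : IsFiniteRank A) :
    ∃ (n : ℕ) (g : ℕ → X →L[ℝ] ℝ) (v : ℕ → W),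
      A = ∑ i ∈ range n, (g i).smulRight (v i) := by
  set E := LinearMap.range (A : X →ₗ[ℝ] W)
  have : FiniteDimensional ℝ E := hA
  let b := Module.finBasis ℝ E
  let A' : X →L[ℝ] E := A.codRestrict E fun x ↦ LinearMap.mem_range_self _ x
  refine ⟨Module.finrank ℝ E,
    fun i ↦ if hi : i < Module.finrank ℝ E then (b.coord ⟨i, hi⟩).toContinuousLinearMap ∘L A'
      else 0,
    fun i ↦ if hi : i < Module.finrank ℝ E then (b ⟨i, hi⟩ : W) else 0, ?_⟩
  ext x
  rw [_root_.sum_apply, ← Fin.sum_univ_eq_sum_range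
    (fun i ↦ (ContinuousLinearMap.smulRight _ _) x)]
  change ((A' x : E) : W) = _
  rw [← b.sum_repr (A' x), Submodule.coe_sum]
  refine sum_congr rfl fun i _ ↦ ?_
  simp [i.isLt]

theorem exists_smulRight_block {A : X →L[ℝ] W} (hA : IsFiniteRank A) {ε : ℝ} (hε : 0 < ε) :
    ∃ (L : ℕ) (g : ℕ → X →L[ℝ] ℝ) (v : ℕ → W), 0 < L ∧
      ∑ t ∈ range L, (g t).smulRight (v t) = A ∧
      ∀ r ≤ L, ∀ x, ‖(∑ t ∈ range r, (g t).smulRight (v t)) x‖ ≤ ‖A x‖ + ε * ‖A‖ * ‖x‖ := by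
  obtain rfl | hA0 := eq_or_ne A 0
  · exact ⟨1, 0, 0, one_pos, by simp, fun r _ x ↦ by simp⟩
  obtain ⟨n, g, v, rfl⟩ := hA.exists_eq_sum_smulRight
  have hn : 0 < n := Nat.pos_of_ne_zero fun hn ↦ hA0 (by simp [hn])
  obtain ⟨m, hm, hfull, hpartial⟩ := exists_sum_range_cyclic_eq_and_norm_sub_smul_le
    (fun i ↦ (g i).smulRight (v i)) hn (mul_pos hε (norm_pos_iff.2 hA0))
  have hterm : ∀ t, ((m : ℝ)⁻¹ • g (t % n)).smulRight (v (t % n)) =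
      (m : ℝ)⁻¹ • (g (t % n)).smulRight (v (t % n)) := fun t ↦ by ext; simp [mul_smul]
  refine ⟨m * n, fun t ↦ (m : ℝ)⁻¹ • g (t % n), fun t ↦ v (t % n), Nat.mul_pos hm hn,
    by simpa only [hterm] using hfull, fun r hr x ↦ ?_⟩
  obtain ⟨c, ⟨hc0, hc1⟩, hc⟩ := hpartial r hr
  simp only [hterm]
  set A := ∑ i ∈ range n, (g i).smulRight (v i)
  set B := ∑ t ∈ range r, (m : ℝ)⁻¹ • (g (t % n)).smulRight (v (t % n))
  calc ‖B x‖ = ‖c • A x + (B - c • A) x‖ := by simp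
    _ ≤ ‖c • A x‖ + ‖(B - c • A) x‖ := norm_add_le _ _
    _ ≤ ‖A x‖ + ε * ‖A‖ * ‖x‖ := by
        gcongr
        · rw [norm_smul, Real.norm_of_nonneg hc0]
          exact mul_le_of_le_one_left (norm_nonneg _) hc1
        · exact (ContinuousLinearMap.le_opNorm _ x).trans (by gcongr)

end IsFiniteRank

section Blocks

variable (L : ℕ → ℕ)

def blockStart (p : ℕ) : ℕ := ∑ q ∈ range p, L q

def blockIndex (s : ℕ) : ℕ := Nat.findGreatest (fun p ↦ blockStart L p ≤ s) s

/-- The blocks `f p 0, …, f p (L p - 1)` written one after the other. -/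
def blockConcat {α : Type*} (f : ℕ → ℕ → α) (s : ℕ) : α :=
  f (blockIndex L s) (s - blockStart L (blockIndex L s))

variable {L}

theorem blockStart_succ (p : ℕ) : blockStart L (p + 1) = blockStart L p + L p :=
  sum_range_succ _ _

theorem blockStart_blockIndex_le (s : ℕ) : blockStart L (blockIndex L s) ≤ s :=
  Nat.findGreatest_spec (P := fun p ↦ blockStart L p ≤ s) (Nat.zero_le s) (by simp [blockStart])

variable (hL : ∀ p, 0 < L p)
include hL

theorem blockStart_strictMono : StrictMono (blockStart L) :=
  strictMono_nat_of_lt_succ fun p ↦ by rw [blockStart_succ]; exact Nat.lt_add_of_pos_right (hL p)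

theorem lt_blockStart_blockIndex_succ (s : ℕ) : s < blockStart L (blockIndex L s + 1) := by
  by_contra! h
  exact Nat.findGreatest_is_greatest (Nat.lt_succ_self _)
    ((blockStart_strictMono hL).le_apply.trans h) h

theorem sub_blockStart_blockIndex_lt (s : ℕ) :
    s - blockStart L (blockIndex L s) < L (blockIndex L s) := by
  have h₁ := blockStart_blockIndex_le (L := L) s
  have h₂ := lt_blockStart_blockIndex_succ hL s
  rw [blockStart_succ] at h₂
  omega

theorem blockIndex_eq {p s : ℕ} (h₁ : blockStart L p ≤ s) (h₂ : s < blockStart L (p + 1)) :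
    blockIndex L s = p := by
  have := (blockStart_strictMono hL).lt_iff_lt.1 <|
    (blockStart_blockIndex_le s).trans_lt h₂
  have := (blockStart_strictMono hL).lt_iff_lt.1 <|
    h₁.trans_lt (lt_blockStart_blockIndex_succ hL s)
  omega

theorem tendsto_blockIndex : Tendsto (blockIndex L) atTop atTop :=
  tendsto_atTop_atTop.2 fun p ↦ ⟨blockStart L p, fun _ hs ↦
    Nat.le_findGreatest ((blockStart_strictMono hL).le_apply.trans hs) hs⟩

theorem blockConcat_blockStart_add {α : Type*} (f : ℕ → ℕ → α) {p t : ℕ} (ht : t < L p) :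
    blockConcat L f (blockStart L p + t) = f p t := by
  rw [blockConcat, blockIndex_eq hL (Nat.le_add_right _ _) (by rw [blockStart_succ]; omega),
    Nat.add_sub_cancel_left]

variable {M : Type*} [AddCommMonoid M] (f : ℕ → ℕ → M)

theorem sum_range_blockStart (p : ℕ) :
    ∑ s ∈ range (blockStart L p), blockConcat L f s = ∑ q ∈ range p, ∑ t ∈ range (L q), f q t := by
  induction p with
  | zero => simp [blockStart]
  | succ p ih =>
    rw [blockStart_succ, sum_range_add, ih, sum_range_succ]
    congr 1
    exact sum_congr rfl fun t ht ↦ blockConcat_blockStart_add hL f (mem_range.1 ht)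

theorem sum_range_blockConcat (N : ℕ) :
    ∑ s ∈ range N, blockConcat L f s =
      ∑ q ∈ range (blockIndex L N), ∑ t ∈ range (L q), f q t +
        ∑ t ∈ range (N - blockStart L (blockIndex L N)), f (blockIndex L N) t := by
  conv_lhs => rw [← Nat.add_sub_of_le (blockStart_blockIndex_le (L := L) N)]
  rw [sum_range_add, sum_range_blockStart hL]
  congr 1
  exact sum_congr rfl fun t ht ↦ blockConcat_blockStart_add hL f
    ((mem_range.1 ht).trans (sub_blockStart_blockIndex_lt hL N))

end Blocks

section OFrame

theorem norm_le_two_mul_of_forall_norm_sum_range_le {E : Type*} [SeminormedAddCommGroup E]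
    {a : ℕ → E} {C : ℝ} (h : ∀ p, ‖∑ q ∈ range p, a q‖ ≤ C) (p : ℕ) : ‖a p‖ ≤ 2 * C :=
  calc ‖a p‖ = ‖∑ q ∈ range (p + 1), a q - ∑ q ∈ range p, a q‖ := by
        rw [sum_range_succ_sub_sum]
    _ ≤ 2 * C := (norm_sub_le _ _).trans (by linarith [h p, h (p + 1)])

variable {X W : Type*} [NormedAddCommGroup X] [NormedSpace ℝ X]
  [NormedAddCommGroup W] [NormedSpace ℝ W]

theorem exists_oframe_of_tendsto_sum {T : X →L[ℝ] W} {A : ℕ → X →L[ℝ] W} {C : ℝ}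
    (hA : ∀ p, IsFiniteRank (A p))
    (hT : ∀ x, Tendsto (fun p ↦ (∑ q ∈ range p, A q) x) atTop (𝓝 (T x)))
    (hC : ∀ p, ‖∑ q ∈ range p, A q‖ ≤ C) :
    ∃ (x' : ℕ → (X →L[ℝ] ℝ)) (w : ℕ → W),
      IsOFrame T x' w ∧ ∀ n, ‖∑ s ∈ range n, (x' s).smulRight (w s)‖ ≤ 5 * C := by
  choose L g v hL hfull hpart using fun p ↦
    (hA p).exists_smulRight_block (ε := 1 / ((p : ℝ) + 1)) (by positivity)
  have hA_norm : ∀ p, ‖A p‖ ≤ 2 * C := norm_le_two_mul_of_forall_norm_sum_range_le hC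
  have hA_tendsto : ∀ x, Tendsto (fun p ↦ A p x) atTop (𝓝 0) := fun x ↦ by
    simpa [sum_range_succ_sub_sum] using
      ((hT x).comp (tendsto_add_atTop_nat 1)).sub (hT x)
  set tail : ℕ → X →L[ℝ] W := fun N ↦ ∑ t ∈ range (N - blockStart L (blockIndex L N)),
    (g (blockIndex L N) t).smulRight (v (blockIndex L N) t)
  have hsum : ∀ N, ∑ s ∈ range N, (blockConcat L g s).smulRight (blockConcat L v s) =
      ∑ q ∈ range (blockIndex L N), A q + tail N := fun N ↦ by
    rw [← sum_congr rfl fun q _ ↦ hfull q]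
    exact sum_range_blockConcat hL (fun p t ↦ (g p t).smulRight (v p t)) N
  have htail : ∀ N x, ‖tail N x‖ ≤
      ‖A (blockIndex L N) x‖ + 1 / ((blockIndex L N : ℝ) + 1) * (2 * C) * ‖x‖ := fun N x ↦
    (hpart _ _ (sub_blockStart_blockIndex_lt hL N).le x).trans (by gcongr; exact hA_norm _)
  refine ⟨blockConcat L g, blockConcat L v, fun x ↦ ?_, fun N ↦ ?_⟩
  · have h_tail : Tendsto (fun N ↦ tail N x) atTop (𝓝 0) := by
      refine squeeze_zero_norm (htail · x) ?_
      have : Tendsto (fun p : ℕ ↦ ‖A p x‖ + 1 / ((p : ℝ) + 1) * (2 * C) * ‖x‖) atTop (𝓝 0) := by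
        simpa using (hA_tendsto x).norm.add
          ((tendsto_one_div_add_atTop_nhds_zero_nat.mul_const (2 * C)).mul_const ‖x‖)
      exact this.comp (tendsto_blockIndex hL)
    have h_apply : ∀ N, ∑ k ∈ range N, blockConcat L g k x • blockConcat L v k =
        (∑ q ∈ range (blockIndex L N), A q) x + tail N x := fun N ↦ by
      rw [← add_apply, ← hsum, _root_.sum_apply]
      rfl
    simpa only [h_apply, Function.comp_apply, add_zero] using
      ((hT x).comp (tendsto_blockIndex hL)).add h_tail
  · have hC0 : 0 ≤ C := (norm_nonneg _).trans (hC 0)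
    have h_tail : ‖tail N‖ ≤ 4 * C := ContinuousLinearMap.opNorm_le_bound _ (by positivity)
      fun x ↦ (htail N x).trans <| by
        have h₁ : 1 / ((blockIndex L N : ℝ) + 1) ≤ 1 := div_le_one_of_le₀ (by simp) (by positivity)
        have h₂ := mul_le_mul_of_nonneg_right (hA_norm (blockIndex L N)) (norm_nonneg x)
        have h₃ := mul_le_mul_of_nonneg_right h₁ (by positivity : 0 ≤ 2 * C * ‖x‖)
        linarith [(A (blockIndex L N)).le_opNorm x]
    rw [hsum]
    linarith [norm_add_le (∑ q ∈ range (blockIndex L N), A q) (tail N), hC (blockIndex L N)]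

end OFrame

theorem oframe_of_uniformly_bounded_pointwise_approx_general {X W : Type*}
    [NormedAddCommGroup X] [NormedSpace ℝ X]
    [NormedAddCommGroup W] [NormedSpace ℝ W]
    (T : X →L[ℝ] W) (S : ℕ → (X →L[ℝ] W)) (C : ℝ)
    (hfr : ∀ N, IsFiniteRank (S N))
    (hconv : ∀ x : X, Tendsto (fun N => S N x) atTop (𝓝 (T x)))
    (hnorm : ∀ N, ‖S N‖ ≤ C) :
    ∃ (x' : ℕ → (X →L[ℝ] ℝ)) (w : ℕ → W),
      IsOFrame T x' w ∧
      ∀ n, ‖∑ s ∈ Finset.range n, (x' s).smulRight (w s)‖ ≤ 5 * C := by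
  set A : ℕ → X →L[ℝ] W := fun p ↦ S p - if p = 0 then 0 else S (p - 1)
  have hA_sum : ∀ p, ∑ q ∈ range (p + 1), A q = S p := by
    intro p
    induction p with
    | zero => simp [A]
    | succ p ih => rw [sum_range_succ, ih]; simp [A]
  refine exists_oframe_of_tendsto_sum (A := A) (fun p ↦ (hfr p).sub ?_) (fun x ↦ ?_) fun p ↦ ?_
  · split_ifs
    exacts [IsFiniteRank.zero, hfr _]
  · rw [← tendsto_add_atTop_iff_nat 1]
    simpa only [hA_sum] using hconv x
  · cases p with
    | zero => simpa using (norm_nonneg _).trans (hnorm 0)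
    | succ p => rw [hA_sum]; exact hnorm p

/-- If `T` is the pointwise limit of a uniformly bounded (by `C`) sequence of
finite-rank operators, then `T` admits an O-frame of rank-one operators whose
partial-sum operators are uniformly bounded by `5 * C`. -/
theorem oframe_of_uniformly_bounded_pointwise_approx {X W : Type*}
    [NormedAddCommGroup X] [NormedSpace ℝ X] [CompleteSpace X]
    [NormedAddCommGroup W] [NormedSpace ℝ W] [CompleteSpace W]
    (T : X →L[ℝ] W) (S : ℕ → (X →L[ℝ] W)) (C : ℝ)
    (hfr : ∀ N, IsFiniteRank (S N))
    (hconv : ∀ x : X, Tendsto (fun N => S N x) atTop (𝓝 (T x)))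
    (hnorm : ∀ N, ‖S N‖ ≤ C) :
    ∃ (x' : ℕ → (X →L[ℝ] ℝ)) (w : ℕ → W),
      IsOFrame T x' w ∧
      ∀ n, ‖∑ s ∈ Finset.range n, (x' s).smulRight (w s)‖ ≤ 5 * C :=
  oframe_of_uniformly_bounded_pointwise_approx_general T S C hfr hconv hnorm
end
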